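/- arXiv:2501.16798 — 2 statements merged into one kernel-verified Lean document; each statement's English description precedes it below -/
import Mathlib

section
/- If F is continuously differentiable on a closed interval I ⊂ (0,∞) and q ≥ 1, then the q-variation of F on I satisfies ‖F‖_{v_q(I)} ≤ C_q ‖F‖_{L^q(I)}^{1/q'} ‖F'‖_{L^q(I)}^{1/q}, where 1/q + 1/q' = 1. -/
/-!
Fix a scale `δ > 0` and an increment `F v - F u` of a partition of `[c, d]`. If `v - u ≤ δ`,
the fundamental theorem of calculus and Hölder give `|F v - F u|^q ≤ δ^(q-1) ∫_u^v |F'|^q`.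
Otherwise each endpoint value is compared, on a window of length `δ` inside `[u, v]`, with the
minimum of `|F|` on that window, which is at most `(δ⁻¹ ∫ |F|^q)^(1/q)`, plus `∫ |F'|` over the
window. As the intervals of the partition are disjoint, summing yields
`∑ |ΔF|^q ≲ δ⁻¹ ‖F‖_q^q + δ^(q-1) ‖F'‖_q^q`, and `δ = ‖F‖_q / ‖F'‖_q` balances the two terms.
-/

open scoped ENNReal NNReal BigOperators
open MeasureTheory

/-- The `q`-variation seminorm of `F` over a set `s ⊆ ℝ`: sup over finite increasing
sequences of points of `s` of `(∑ |F(t_{i+1}) - F(t_i)|^q)^{1/q}`. -/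
noncomputable def qVariationOn (q : ℝ) (F : ℝ → ℂ) (s : Set ℝ) : ℝ≥0∞ :=
  ⨆ (L : ℕ) (t : Fin (L + 1) → ℝ) (_ : StrictMono t) (_ : ∀ i, t i ∈ s),
    (∑ i : Fin L, (‖F (t i.succ) - F (t i.castSucc)‖₊ : ℝ≥0∞) ^ q) ^ (1 / q)

open Set Filter Topology

section General

variable {α ε : Type*} [MeasurableSpace α] {μ : Measure α} [TopologicalSpace ε]
  [ContinuousENorm ε]

theorem rpow_setLIntegral_enorm_le {q : ℝ} (hq : 1 ≤ q) {s : Set α} {g : α → ε}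
    (hg : AEStronglyMeasurable g (μ.restrict s)) :
    (∫⁻ x in s, ‖g x‖ₑ ∂μ) ^ q ≤ μ s ^ (q - 1) * ∫⁻ x in s, ‖g x‖ₑ ^ q ∂μ := by
  have hq0 : 0 < q := zero_lt_one.trans_le hq
  have hL1 := eLpNorm_le_eLpNorm_mul_rpow_measure_univ (p := 1) (q := ENNReal.ofReal q)
    (by simpa using hq) hg
  rw [eLpNorm_one_eq_lintegral_enorm, eLpNorm_eq_lintegral_rpow_enorm_toReal
    (by simpa using hq0) ENNReal.ofReal_ne_top, ENNReal.toReal_ofReal hq0.le,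
    ENNReal.toReal_one, div_one, Measure.restrict_apply_univ] at hL1
  calc (∫⁻ x in s, ‖g x‖ₑ ∂μ) ^ q
      ≤ ((∫⁻ x in s, ‖g x‖ₑ ^ q ∂μ) ^ (1 / q) * μ s ^ (1 - 1 / q)) ^ q :=
        ENNReal.rpow_le_rpow hL1 hq0.le
    _ = μ s ^ (q - 1) * ∫⁻ x in s, ‖g x‖ₑ ^ q ∂μ := by
        rw [ENNReal.mul_rpow_of_nonneg _ _ hq0.le, ← ENNReal.rpow_mul, ← ENNReal.rpow_mul,
          one_div_mul_cancel hq0.ne', ENNReal.rpow_one, mul_comm]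
        congr 2
        field_simp

theorem rpow_setLIntegral_Ioc_enorm_le {E : Type*} [NormedAddCommGroup E] {q u v : ℝ}
    (hq : 1 ≤ q) {g : ℝ → E} (hg : ContinuousOn g (Icc u v)) :
    (∫⁻ x in Ioc u v, ‖g x‖ₑ) ^ q ≤
      ENNReal.ofReal (v - u) ^ (q - 1) * ∫⁻ x in Ioc u v, ‖g x‖ₑ ^ q := by
  simpa [Real.volume_Ioc] using rpow_setLIntegral_enorm_le (μ := volume) hq
    ((hg.mono Ioc_subset_Icc_self).aestronglyMeasurable measurableSet_Ioc)

theorem eLpNorm_ofReal_rpow_eq_lintegral {q : ℝ} (hq : 0 < q) (g : α → ε) :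
    eLpNorm g (ENNReal.ofReal q) μ ^ q = ∫⁻ x, ‖g x‖ₑ ^ q ∂μ := by
  have := eLpNorm_nnreal_pow_eq_lintegral (μ := μ) (f := g) (p := q.toNNReal) (by simpa using hq)
  rwa [Real.coe_toNNReal q hq.le] at this

end General

theorem ContinuousOn.memLp_restrict_Icc {E : Type*} [NormedAddCommGroup E] {g : ℝ → E} {c d : ℝ}
    (hg : ContinuousOn g (Icc c d)) (p : ℝ≥0∞) : MemLp g p (volume.restrict (Icc c d)) := by
  obtain ⟨M, hM⟩ := isCompact_Icc.exists_bound_of_continuousOn hg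
  exact MemLp.of_bound (hg.aestronglyMeasurable measurableSet_Icc) M
    ((ae_restrict_iff' measurableSet_Icc).2 (ae_of_all _ hM))

theorem exists_enorm_rpow_mul_le_setLIntegral_Ioc {E : Type*} [NormedAddCommGroup E] {g : ℝ → E}
    {u v q : ℝ} (huv : u ≤ v) (hg : ContinuousOn g (Icc u v)) :
    ∃ s ∈ Icc u v, ‖g s‖ₑ ^ q * ENNReal.ofReal (v - u) ≤ ∫⁻ x in Ioc u v, ‖g x‖ₑ ^ q := by
  obtain ⟨s, hs, hmin⟩ := isCompact_Icc.exists_isMinOn (nonempty_Icc.2 huv)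
    ((ENNReal.continuous_rpow_const (y := q)).comp_continuousOn hg.enorm)
  refine ⟨s, hs, ?_⟩
  rw [← Real.volume_Ioc, ← setLIntegral_const]
  exact setLIntegral_mono' measurableSet_Ioc fun x hx => hmin (Ioc_subset_Icc_self hx)

theorem sum_setLIntegral_Ioc_le {L : ℕ} {t : Fin (L + 1) → ℝ} (ht : Monotone t) (f : ℝ → ℝ≥0∞)
    (μ : Measure ℝ) :
    ∑ i : Fin L, ∫⁻ x in Ioc (t i.castSucc) (t i.succ), f x ∂μ ≤
      ∫⁻ x in Icc (t 0) (t (Fin.last L)), f x ∂μ := by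
  have hdisj : Pairwise (Function.onFun Disjoint fun i : Fin L => Ioc (t i.castSucc) (t i.succ)) :=
    (pairwise_disjoint_on _).2 fun i j hij =>
      Ioc_disjoint_Ioc_of_le (ht (Fin.succ_le_castSucc_iff.2 hij))
  calc ∑ i : Fin L, ∫⁻ x in Ioc (t i.castSucc) (t i.succ), f x ∂μ
      = ∫⁻ x in ⋃ i : Fin L, Ioc (t i.castSucc) (t i.succ), f x ∂μ := by
        rw [lintegral_iUnion (fun _ => measurableSet_Ioc) hdisj, tsum_fintype]
    _ ≤ _ := lintegral_mono_set <| iUnion_subset fun i =>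
        Ioc_subset_Icc_self.trans (Icc_subset_Icc (ht (Fin.zero_le _)) (ht (Fin.le_last _)))

theorem ENNReal.inv_div_mul_rpow_add_div_rpow_mul_rpow {x y : ℝ≥0∞} {q : ℝ} (hq : 1 ≤ q)
    (hx : x ≠ 0) (hx' : x ≠ ⊤) (hy : y ≠ 0) (hy' : y ≠ ⊤) :
    (x / y)⁻¹ * x ^ q + (x / y) ^ (q - 1) * y ^ q = 2 * (x ^ (q - 1) * y) := by
  have hpow : ∀ z : ℝ≥0∞, z ≠ 0 → z ≠ ⊤ → z ^ q = z ^ (q - 1) * z := fun z hz hz' => by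
    rw [ENNReal.rpow_sub _ _ hz hz', ENNReal.rpow_one, ENNReal.div_mul_cancel hz hz']
  have hy0 : y ^ (q - 1) ≠ 0 := (ENNReal.rpow_pos (pos_iff_ne_zero.2 hy) hy').ne'
  have hyt : y ^ (q - 1) ≠ ⊤ := ENNReal.rpow_ne_top_of_nonneg (by linarith) hy'
  rw [ENNReal.inv_div (Or.inl hy') (Or.inl hy), ENNReal.div_rpow_of_nonneg _ _ (by linarith),
    hpow x hx hx', hpow y hy hy', div_eq_mul_inv, div_eq_mul_inv]
  calc y * x⁻¹ * (x ^ (q - 1) * x) + x ^ (q - 1) * (y ^ (q - 1))⁻¹ * (y ^ (q - 1) * y)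
      = x ^ (q - 1) * y * (x * x⁻¹) + x ^ (q - 1) * y * (y ^ (q - 1) * (y ^ (q - 1))⁻¹) := by
        ring
    _ = 2 * (x ^ (q - 1) * y) := by
        rw [ENNReal.mul_inv_cancel hx hx', ENNReal.mul_inv_cancel hy0 hyt]
        ring

theorem le_mul_two_mul_rpow_mul_of_forall_le {X K a b : ℝ≥0∞} {q : ℝ} (hq : 1 ≤ q)
    (hK : K ≠ ⊤) (ha : a ≠ ⊤) (hb : b ≠ ⊤)
    (h : ∀ δ : ℝ, 0 < δ →
      X ≤ K * ((ENNReal.ofReal δ)⁻¹ * a ^ q + ENNReal.ofReal δ ^ (q - 1) * b ^ q)) :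
    X ≤ K * (2 * (a ^ (q - 1) * b)) := by
  -- Perturbing `a` and `b` by `ε` keeps the balancing scale `(a + ε) / (b + ε)` in `(0, ∞)`.
  have hperturbed : ∀ ε : ℝ≥0, 0 < ε → X ≤ K * (2 * ((a + ε) ^ (q - 1) * (b + ε))) := by
    intro ε hε
    have hε0 : (ε : ℝ≥0∞) ≠ 0 := by exact_mod_cast hε.ne'
    have hx : a + ε ≠ 0 := by simp [hε0]
    have hy : b + ε ≠ 0 := by simp [hε0]
    have hx' : a + ε ≠ ⊤ := by simp [ha]
    have hy' : b + ε ≠ ⊤ := by simp [hb]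
    have hδ : ENNReal.ofReal ((a + ε) / (b + ε)).toReal = (a + ε) / (b + ε) :=
      ENNReal.ofReal_toReal (ENNReal.div_ne_top hx' hy)
    calc X ≤ K * ((ENNReal.ofReal ((a + ε) / (b + ε)).toReal)⁻¹ * a ^ q +
          ENNReal.ofReal ((a + ε) / (b + ε)).toReal ^ (q - 1) * b ^ q) :=
          h _ (ENNReal.toReal_pos (ENNReal.div_pos hx hy').ne' (ENNReal.div_ne_top hx' hy))
      _ ≤ K * (((a + ε) / (b + ε))⁻¹ * (a + ε) ^ q +
            ((a + ε) / (b + ε)) ^ (q - 1) * (b + ε) ^ q) := by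
          rw [hδ]
          gcongr <;> exact le_self_add
      _ = K * (2 * ((a + ε) ^ (q - 1) * (b + ε))) := by
          rw [ENNReal.inv_div_mul_rpow_add_div_rpow_mul_rpow hq hx hx' hy hy']
  have hlim : Tendsto (fun ε : ℝ≥0 => K * (2 * ((a + ε) ^ (q - 1) * (b + ε)))) (𝓝[>] 0)
      (𝓝 (K * (2 * (a ^ (q - 1) * b)))) := by
    have hcoe : Tendsto (fun ε : ℝ≥0 => (ε : ℝ≥0∞)) (𝓝[>] 0) (𝓝 0) :=
      (ENNReal.continuous_coe.tendsto' 0 0 ENNReal.coe_zero).mono_left nhdsWithin_le_nhds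
    have hb' : Tendsto (fun ε : ℝ≥0 => b + ε) (𝓝[>] 0) (𝓝 b) := by
      simpa using tendsto_const_nhds.add hcoe
    have ha' : Tendsto (fun ε : ℝ≥0 => (a + ε) ^ (q - 1)) (𝓝[>] 0) (𝓝 (a ^ (q - 1))) :=
      (ENNReal.continuous_rpow_const.tendsto a).comp (by simpa using tendsto_const_nhds.add hcoe)
    refine ENNReal.Tendsto.const_mul (ENNReal.Tendsto.const_mul
      (ENNReal.Tendsto.mul ha' (Or.inr hb) hb' (Or.inr ?_)) (Or.inr ENNReal.ofNat_ne_top))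
      (Or.inr hK)
    exact ENNReal.rpow_ne_top_of_nonneg (by linarith) ha
  exact ge_of_tendsto hlim (eventually_nhdsWithin_of_forall hperturbed)

section Calculus

variable {E : Type*} [NormedAddCommGroup E] {F F' : ℝ → E} {c d q u v : ℝ}

noncomputable def sobolevEnergy (q δ : ℝ) (F F' : ℝ → E) (s : Set ℝ) : ℝ≥0∞ :=
  (ENNReal.ofReal δ)⁻¹ * (∫⁻ x in s, ‖F x‖ₑ ^ q) +
    ENNReal.ofReal δ ^ (q - 1) * ∫⁻ x in s, ‖F' x‖ₑ ^ q

theorem sobolevEnergy_mono {δ : ℝ} {s t : Set ℝ} (hst : s ⊆ t) :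
    sobolevEnergy q δ F F' s ≤ sobolevEnergy q δ F F' t := by
  unfold sobolevEnergy
  gcongr

theorem sum_sobolevEnergy_Ioc_le {δ : ℝ} {L : ℕ} {t : Fin (L + 1) → ℝ} (ht : Monotone t) :
    ∑ i : Fin L, sobolevEnergy q δ F F' (Ioc (t i.castSucc) (t i.succ)) ≤
      sobolevEnergy q δ F F' (Icc (t 0) (t (Fin.last L))) := by
  simp only [sobolevEnergy, Finset.sum_add_distrib, ← Finset.mul_sum]
  gcongr <;> exact sum_setLIntegral_Ioc_le ht _ _

variable [NormedSpace ℝ E] [CompleteSpace E]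

theorem enorm_sub_le_setLIntegral_Ioc_enorm_deriv
    (hF : ∀ t ∈ Icc c d, HasDerivWithinAt F (F' t) (Icc c d) t) (hF' : ContinuousOn F' (Icc c d))
    (huv : u ≤ v) (hsub : Icc u v ⊆ Icc c d) :
    ‖F v - F u‖ₑ ≤ ∫⁻ x in Ioc u v, ‖F' x‖ₑ := by
  have hderiv : ∀ x ∈ Ioo u v, HasDerivWithinAt F (F' x) (Ioi x) x := fun x hx =>
    ((hF x (hsub (Ioo_subset_Icc_self hx))).hasDerivAt
      (mem_of_superset (Icc_mem_nhds hx.1 hx.2) hsub)).hasDerivWithinAt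
  have hFTC : ∫ x in u..v, F' x = F v - F u :=
    intervalIntegral.integral_eq_sub_of_hasDeriv_right_of_le huv
      (fun x hx => (hF x (hsub hx)).continuousWithinAt.mono hsub) hderiv
      ((hF'.mono hsub).intervalIntegrable_of_Icc huv)
  rw [← hFTC, intervalIntegral.integral_of_le huv]
  exact enorm_integral_le_lintegral_enorm _

theorem enorm_sub_le_setLIntegral_Ioc_enorm_deriv_of_mem
    (hF : ∀ t ∈ Icc c d, HasDerivWithinAt F (F' t) (Icc c d) t) (hF' : ContinuousOn F' (Icc c d))
    (hsub : Icc u v ⊆ Icc c d) {s w : ℝ} (hs : s ∈ Icc u v) (hw : w ∈ Icc u v) :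
    ‖F w - F s‖ₑ ≤ ∫⁻ x in Ioc u v, ‖F' x‖ₑ := by
  rcases le_total s w with hsw | hws
  · exact (enorm_sub_le_setLIntegral_Ioc_enorm_deriv hF hF' hsw
      ((Icc_subset_Icc hs.1 hw.2).trans hsub)).trans
      (lintegral_mono_set (Ioc_subset_Ioc hs.1 hw.2))
  · rw [enorm_sub_rev]
    exact (enorm_sub_le_setLIntegral_Ioc_enorm_deriv hF hF' hws
      ((Icc_subset_Icc hw.1 hs.2).trans hsub)).trans
      (lintegral_mono_set (Ioc_subset_Ioc hw.1 hs.2))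

theorem enorm_rpow_le_two_rpow_mul_sobolevEnergy (hq : 1 ≤ q)
    (hF : ∀ t ∈ Icc c d, HasDerivWithinAt F (F' t) (Icc c d) t) (hF' : ContinuousOn F' (Icc c d))
    (huv : u < v) (hsub : Icc u v ⊆ Icc c d) {w : ℝ} (hw : w ∈ Icc u v) :
    ‖F w‖ₑ ^ q ≤ 2 ^ (q - 1) * sobolevEnergy q (v - u) F F' (Ioc u v) := by
  have hFc : ContinuousOn F (Icc u v) := fun x hx =>
    (hF x (hsub hx)).continuousWithinAt.mono hsub
  obtain ⟨s, hs, hmin⟩ := exists_enorm_rpow_mul_le_setLIntegral_Ioc huv.le hFc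
  have hFs : ‖F s‖ₑ ^ q ≤ (ENNReal.ofReal (v - u))⁻¹ * ∫⁻ x in Ioc u v, ‖F x‖ₑ ^ q := by
    rw [mul_comm, ← div_eq_mul_inv]
    exact (ENNReal.le_div_iff_mul_le (Or.inl (by simpa using huv))
      (Or.inl ENNReal.ofReal_ne_top)).2 hmin
  have hF's : (∫⁻ x in Ioc u v, ‖F' x‖ₑ) ^ q ≤
      ENNReal.ofReal (v - u) ^ (q - 1) * ∫⁻ x in Ioc u v, ‖F' x‖ₑ ^ q :=
    rpow_setLIntegral_Ioc_enorm_le hq (hF'.mono hsub)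
  calc ‖F w‖ₑ ^ q ≤ (‖F s‖ₑ + ∫⁻ x in Ioc u v, ‖F' x‖ₑ) ^ q := by
        gcongr
        calc ‖F w‖ₑ = ‖F s + (F w - F s)‖ₑ := by rw [add_sub_cancel]
          _ ≤ ‖F s‖ₑ + ‖F w - F s‖ₑ := enorm_add_le _ _
          _ ≤ _ := by
              gcongr
              exact enorm_sub_le_setLIntegral_Ioc_enorm_deriv_of_mem hF hF' hsub hs hw
    _ ≤ 2 ^ (q - 1) * (‖F s‖ₑ ^ q + (∫⁻ x in Ioc u v, ‖F' x‖ₑ) ^ q) :=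
        ENNReal.rpow_add_le_mul_rpow_add_rpow _ _ hq
    _ ≤ _ := by
        unfold sobolevEnergy
        gcongr

theorem enorm_sub_rpow_le_sobolevEnergy (hq : 1 ≤ q)
    (hF : ∀ t ∈ Icc c d, HasDerivWithinAt F (F' t) (Icc c d) t) (hF' : ContinuousOn F' (Icc c d))
    (huv : u < v) (hsub : Icc u v ⊆ Icc c d) {δ : ℝ} (hδ : 0 < δ) :
    ‖F v - F u‖ₑ ^ q ≤ 2 * 4 ^ (q - 1) * sobolevEnergy q δ F F' (Ioc u v) := by
  rcases le_or_gt (v - u) δ with hshort | hlong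
  · have h4 : (1 : ℝ≥0∞) ≤ 4 ^ (q - 1) := by
      simpa using ENNReal.rpow_le_rpow_of_exponent_le (by norm_num : (1 : ℝ≥0∞) ≤ 4)
        (by linarith : (0 : ℝ) ≤ q - 1)
    have hK : (1 : ℝ≥0∞) ≤ 2 * 4 ^ (q - 1) := one_le_mul (by norm_num) h4
    calc ‖F v - F u‖ₑ ^ q ≤ (∫⁻ x in Ioc u v, ‖F' x‖ₑ) ^ q := by
          gcongr
          exact enorm_sub_le_setLIntegral_Ioc_enorm_deriv hF hF' huv.le hsub
      _ ≤ ENNReal.ofReal (v - u) ^ (q - 1) * ∫⁻ x in Ioc u v, ‖F' x‖ₑ ^ q :=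
          rpow_setLIntegral_Ioc_enorm_le hq (hF'.mono hsub)
      _ ≤ ENNReal.ofReal δ ^ (q - 1) * ∫⁻ x in Ioc u v, ‖F' x‖ₑ ^ q :=
          mul_le_mul_left (ENNReal.rpow_le_rpow (ENNReal.ofReal_le_ofReal hshort)
            (by linarith)) _
      _ ≤ sobolevEnergy q δ F F' (Ioc u v) := le_add_self
      _ ≤ _ := le_mul_of_one_le_left' hK
  · have hright : ‖F v‖ₑ ^ q ≤ 2 ^ (q - 1) * sobolevEnergy q δ F F' (Ioc u v) := by
      have hwindow := enorm_rpow_le_two_rpow_mul_sobolevEnergy hq hF hF' (u := v - δ)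
        (by linarith) ((Icc_subset_Icc (by linarith) le_rfl).trans hsub)
        (right_mem_Icc.2 (by linarith))
      rw [sub_sub_cancel] at hwindow
      refine hwindow.trans ?_
      gcongr
      exact sobolevEnergy_mono (Ioc_subset_Ioc (by linarith) le_rfl)
    have hleft : ‖F u‖ₑ ^ q ≤ 2 ^ (q - 1) * sobolevEnergy q δ F F' (Ioc u v) := by
      have hwindow := enorm_rpow_le_two_rpow_mul_sobolevEnergy hq hF hF' (v := u + δ)
        (by linarith) ((Icc_subset_Icc le_rfl (by linarith)).trans hsub)
        (left_mem_Icc.2 (by linarith))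
      rw [add_sub_cancel_left] at hwindow
      refine hwindow.trans ?_
      gcongr
      exact sobolevEnergy_mono (Ioc_subset_Ioc le_rfl (by linarith))
    calc ‖F v - F u‖ₑ ^ q ≤ (‖F v‖ₑ + ‖F u‖ₑ) ^ q := by
          gcongr
          exact enorm_sub_le
      _ ≤ 2 ^ (q - 1) * (‖F v‖ₑ ^ q + ‖F u‖ₑ ^ q) :=
          ENNReal.rpow_add_le_mul_rpow_add_rpow _ _ hq
      _ ≤ 2 ^ (q - 1) * (2 ^ (q - 1) * sobolevEnergy q δ F F' (Ioc u v) +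
            2 ^ (q - 1) * sobolevEnergy q δ F F' (Ioc u v)) := by
          gcongr
      _ = 2 * 4 ^ (q - 1) * sobolevEnergy q δ F F' (Ioc u v) := by
          rw [show (4 : ℝ≥0∞) = 2 * 2 by norm_num,
            ENNReal.mul_rpow_of_nonneg _ _ (by linarith : (0 : ℝ) ≤ q - 1)]
          ring

theorem sum_enorm_sub_rpow_le_sobolevEnergy (hq : 1 ≤ q)
    (hF : ∀ t ∈ Icc c d, HasDerivWithinAt F (F' t) (Icc c d) t) (hF' : ContinuousOn F' (Icc c d))
    {L : ℕ} {t : Fin (L + 1) → ℝ} (ht : StrictMono t) (hts : ∀ i, t i ∈ Icc c d)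
    {δ : ℝ} (hδ : 0 < δ) :
    ∑ i : Fin L, ‖F (t i.succ) - F (t i.castSucc)‖ₑ ^ q ≤
      2 * 4 ^ (q - 1) * sobolevEnergy q δ F F' (Icc c d) := by
  calc ∑ i : Fin L, ‖F (t i.succ) - F (t i.castSucc)‖ₑ ^ q
      ≤ ∑ i : Fin L, 2 * 4 ^ (q - 1) * sobolevEnergy q δ F F' (Ioc (t i.castSucc) (t i.succ)) :=
        Finset.sum_le_sum fun i _ => enorm_sub_rpow_le_sobolevEnergy hq hF hF'
          (ht (Fin.castSucc_lt_succ (i := i))) (Icc_subset_Icc (hts _).1 (hts _).2) hδ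
    _ ≤ 2 * 4 ^ (q - 1) * sobolevEnergy q δ F F' (Icc (t 0) (t (Fin.last L))) := by
        rw [← Finset.mul_sum]
        gcongr
        exact sum_sobolevEnergy_Ioc_le ht.monotone
    _ ≤ 2 * 4 ^ (q - 1) * sobolevEnergy q δ F F' (Icc c d) := by
        gcongr
        exact sobolevEnergy_mono (Icc_subset_Icc (hts 0).1 (hts _).2)

end Calculus

theorem ENNReal.rpow_mul_rpow_sub_one_mul_rpow_one_div {K a b : ℝ≥0∞} {q : ℝ} (hq : 0 < q) :
    (K ^ q * (a ^ (q - 1) * b)) ^ (1 / q) = K * a ^ (1 - 1 / q) * b ^ (1 / q) := by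
  rw [← mul_assoc, ENNReal.mul_rpow_of_nonneg _ _ (by positivity),
    ENNReal.mul_rpow_of_nonneg _ _ (by positivity), ← ENNReal.rpow_mul, ← ENNReal.rpow_mul,
    mul_one_div_cancel hq.ne', ENNReal.rpow_one]
  congr 2
  field_simp

theorem qVariationOn_le_of_sum_rpow_le {q : ℝ} (hq : 0 ≤ q) {F : ℝ → ℂ} {s : Set ℝ} {M : ℝ≥0∞}
    (h : ∀ (L : ℕ) (t : Fin (L + 1) → ℝ), StrictMono t → (∀ i, t i ∈ s) →
      ∑ i : Fin L, ‖F (t i.succ) - F (t i.castSucc)‖ₑ ^ q ≤ M) :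
    qVariationOn q F s ≤ M ^ (1 / q) :=
  iSup_le fun L => iSup_le fun t => iSup_le fun ht => iSup_le fun hts =>
    ENNReal.rpow_le_rpow (h L t ht hts) (by positivity)

/-- Sobolev embedding for variation norms: if `F ∈ C¹(I)`, `I = [c,d] ⊆ (0,∞)` and `q ≥ 1`,
then `‖F‖_{v_q(I)} ≤ C_q ‖F‖_{L^q(I)}^{1/q'} ‖F'‖_{L^q(I)}^{1/q}`, `1/q + 1/q' = 1`. -/
theorem variation_sobolev_embedding (q : ℝ) (hq : 1 ≤ q) :
    ∃ C : ℝ≥0∞, C ≠ ⊤ ∧ ∀ (c d : ℝ) (F F' : ℝ → ℂ), 0 < c → c ≤ d →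
      (∀ t ∈ Set.Icc c d, HasDerivWithinAt F (F' t) (Set.Icc c d) t) →
      ContinuousOn F' (Set.Icc c d) →
      qVariationOn q F (Set.Icc c d) ≤
        C * (eLpNorm F (ENNReal.ofReal q) (volume.restrict (Set.Icc c d))) ^ (1 - 1 / q)
          * (eLpNorm F' (ENNReal.ofReal q) (volume.restrict (Set.Icc c d))) ^ (1 / q) := by
  have hq0 : 0 < q := by linarith
  refine ⟨4, by norm_num, fun c d F F' _ _ hF hF' => ?_⟩
  set a := eLpNorm F (ENNReal.ofReal q) (volume.restrict (Icc c d))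
  set b := eLpNorm F' (ENNReal.ofReal q) (volume.restrict (Icc c d))
  have ha : a ≠ ⊤ := (ContinuousOn.memLp_restrict_Icc (fun x hx => (hF x hx).continuousWithinAt)
    _).eLpNorm_ne_top
  have hb : b ≠ ⊤ := (hF'.memLp_restrict_Icc _).eLpNorm_ne_top
  have hsum (L : ℕ) (t : Fin (L + 1) → ℝ) (ht : StrictMono t) (hts : ∀ i, t i ∈ Icc c d) :
      ∑ i : Fin L, ‖F (t i.succ) - F (t i.castSucc)‖ₑ ^ q ≤ 4 ^ q * (a ^ (q - 1) * b) := by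
    have hconst : (4 : ℝ≥0∞) ^ q = 2 * 4 ^ (q - 1) * 2 := by
      conv_lhs => rw [← sub_add_cancel q 1, ENNReal.rpow_add _ _ (by norm_num) (by norm_num),
        ENNReal.rpow_one]
      ring
    rw [hconst, mul_assoc]
    refine le_mul_two_mul_rpow_mul_of_forall_le hq (by finiteness) ha hb fun δ hδ => ?_
    have := sum_enorm_sub_rpow_le_sobolevEnergy hq hF hF' ht hts hδ
    rwa [sobolevEnergy, ← eLpNorm_ofReal_rpow_eq_lintegral hq0,
      ← eLpNorm_ofReal_rpow_eq_lintegral hq0] at this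
  calc qVariationOn q F (Icc c d) ≤ (4 ^ q * (a ^ (q - 1) * b)) ^ (1 / q) :=
        qVariationOn_le_of_sum_rpow_le hq0.le hsum
    _ = 4 * a ^ (1 - 1 / q) * b ^ (1 / q) := ENNReal.rpow_mul_rpow_sub_one_mul_rpow_one_div hq0
end

section
/- Let m ≥ 2 and M(ξ) = -((m-1)/m) · (-ξ_1)^{m/(m-1)} / ξ_2^{1/(m-1)} defined on the open cone where ξ_1 < 0 and ξ_2 > 0. Then the Hessian matrix of M has rank exactly one at every point of this cone. -/
/-- The phase `M(ξ) = -((m-1)/m) (-ξ₁)^{m/(m-1)} / ξ₂^{1/(m-1)}` on the cone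
`ξ₁ < 0, ξ₂ > 0`, written as a function of the two coordinates. -/
noncomputable def phaseM (m : ℕ) (a b : ℝ) : ℝ :=
  -((m - 1 : ℝ) / m) * (-a) ^ ((m : ℝ) / (m - 1)) / b ^ ((1 : ℝ) / (m - 1))

/-- First partial derivative in the first variable. -/
noncomputable def pd1 (f : ℝ → ℝ → ℝ) (a b : ℝ) : ℝ := deriv (fun x => f x b) a

/-- First partial derivative in the second variable. -/
noncomputable def pd2 (f : ℝ → ℝ → ℝ) (a b : ℝ) : ℝ := deriv (fun y => f a y) b

/-- The Hessian matrix of `f : ℝ → ℝ → ℝ` at `(a, b)`. -/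
noncomputable def hessian (f : ℝ → ℝ → ℝ) (a b : ℝ) : Matrix (Fin 2) (Fin 2) ℝ :=
  !![pd1 (pd1 f) a b, pd2 (pd1 f) a b; pd1 (pd2 f) a b, pd2 (pd2 f) a b]


/-! `M(x, y) = y φ(x / y)` is the perspective of `φ(t) = -((m-1)/m) (-t)^p`, `p = m/(m-1)`,
which is what its homogeneity of degree one amounts to. The Hessian of a perspective at `(a, b)`
is `(φ''(a/b) / b) w wᵀ` with `w = (1, -a/b)`, and `φ''` does not vanish for `t < 0`
since `p ∉ {0, 1}`. -/

open Filter Topology Function Matrix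

namespace Matrix

variable {m n K : Type*} [Fintype n] [Field K]

theorem rank_pos_of_ne_zero {A : Matrix m n K} (hA : A ≠ 0) : 0 < A.rank := by
  have := Module.Finite.span_of_finite K (Set.finite_range A.col)
  rw [Nat.pos_iff_ne_zero, rank_eq_finrank_span_cols, Ne, Submodule.finrank_eq_zero,
    Submodule.span_eq_bot]
  refine fun hcols => hA (ext fun i j => ?_)
  exact congrFun (hcols _ ⟨j, rfl⟩) i

theorem rank_vecMulVec_eq_one {w : m → K} {v : n → K} (hw : w ≠ 0) (hv : v ≠ 0) :
    (vecMulVec w v).rank = 1 := by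
  refine le_antisymm (rank_vecMulVec_le w v) (rank_pos_of_ne_zero fun h => ?_)
  obtain ⟨i, hi⟩ := Function.ne_iff.mp hw
  obtain ⟨j, hj⟩ := Function.ne_iff.mp hv
  exact mul_ne_zero hi hj congr($h i j)

end Matrix

section PartialDerivatives

variable {f g : ℝ → ℝ → ℝ} {a b : ℝ}

theorem eventuallyEq_pd1 (h : uncurry f =ᶠ[𝓝 (a, b)] uncurry g) :
    uncurry (pd1 f) =ᶠ[𝓝 (a, b)] uncurry (pd1 g) := by
  filter_upwards [h.eventually_nhds] with z hz
  exact EventuallyEq.deriv_eq ((Continuous.prodMk_left z.2).tendsto z.1 |>.eventually hz)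

theorem eventuallyEq_pd2 (h : uncurry f =ᶠ[𝓝 (a, b)] uncurry g) :
    uncurry (pd2 f) =ᶠ[𝓝 (a, b)] uncurry (pd2 g) := by
  filter_upwards [h.eventually_nhds] with z hz
  exact EventuallyEq.deriv_eq ((Continuous.prodMk_right z.1).tendsto z.2 |>.eventually hz)

theorem pd1_eq_of_eventuallyEq (h : uncurry f =ᶠ[𝓝 (a, b)] uncurry g) : pd1 f a b = pd1 g a b :=
  (eventuallyEq_pd1 h).self_of_nhds

theorem pd2_eq_of_eventuallyEq (h : uncurry f =ᶠ[𝓝 (a, b)] uncurry g) : pd2 f a b = pd2 g a b :=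
  (eventuallyEq_pd2 h).self_of_nhds

theorem hessian_congr (h : uncurry f =ᶠ[𝓝 (a, b)] uncurry g) : hessian f a b = hessian g a b := by
  ext i j
  fin_cases i <;> fin_cases j
  exacts [pd1_eq_of_eventuallyEq (eventuallyEq_pd1 h), pd2_eq_of_eventuallyEq (eventuallyEq_pd1 h),
    pd1_eq_of_eventuallyEq (eventuallyEq_pd2 h), pd2_eq_of_eventuallyEq (eventuallyEq_pd2 h)]

end PartialDerivatives

noncomputable def perspective (φ : ℝ → ℝ) (x y : ℝ) : ℝ := y * φ (x / y)

section Perspective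

variable {φ φ' : ℝ → ℝ} {φ'' a b x y : ℝ}

theorem hasDerivAt_const_div {c y : ℝ} (hy : y ≠ 0) :
    HasDerivAt (fun y => c / y) (-(c / y) / y) y :=
  ((hasDerivAt_const y c).div (hasDerivAt_id y) hy).congr_deriv <| by
    simp only [id_eq, zero_mul, mul_one, zero_sub]
    ring

theorem hasDerivAt_perspective_left (hy : y ≠ 0) (hφ : HasDerivAt φ (φ' (x / y)) (x / y)) :
    HasDerivAt (fun x => perspective φ x y) (φ' (x / y)) x :=
  ((hφ.comp x ((hasDerivAt_id x).div_const y)).const_mul y).congr_deriv (by field_simp)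

theorem hasDerivAt_perspective_right (hy : y ≠ 0) (hφ : HasDerivAt φ (φ' (x / y)) (x / y)) :
    HasDerivAt (fun y => perspective φ x y) (φ (x / y) - x / y * φ' (x / y)) y :=
  ((hasDerivAt_id y).mul (hφ.comp y (hasDerivAt_const_div hy))).congr_deriv <| by
    simp only [Function.comp_apply, one_mul, id_eq]
    field_simp
    ring

theorem hasDerivAt_sub_mul_deriv {t : ℝ} (hφ : HasDerivAt φ (φ' t) t)
    (hφ' : HasDerivAt φ' φ'' t) :
    HasDerivAt (fun t => φ t - t * φ' t) (-(t * φ'')) t :=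
  (hφ.sub ((hasDerivAt_id t).mul hφ')).congr_deriv (by simp)

theorem eventually_hasDerivAt_div (hb : b ≠ 0) (hφ : ∀ᶠ t in 𝓝 (a / b), HasDerivAt φ (φ' t) t) :
    ∀ᶠ z : ℝ × ℝ in 𝓝 (a, b), z.2 ≠ 0 ∧ HasDerivAt φ (φ' (z.1 / z.2)) (z.1 / z.2) := by
  have hdiv : Tendsto (fun z : ℝ × ℝ => z.1 / z.2) (𝓝 (a, b)) (𝓝 (a / b)) :=
    continuousAt_fst.div₀ continuousAt_snd hb
  exact (continuousAt_snd.eventually_ne hb).and (hdiv.eventually hφ)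

theorem pd1_perspective_eventuallyEq (hb : b ≠ 0)
    (hφ : ∀ᶠ t in 𝓝 (a / b), HasDerivAt φ (φ' t) t) :
    uncurry (pd1 (perspective φ)) =ᶠ[𝓝 (a, b)] uncurry fun x y => φ' (x / y) := by
  filter_upwards [eventually_hasDerivAt_div hb hφ] with z ⟨hz, hφz⟩
  exact (hasDerivAt_perspective_left hz hφz).deriv

theorem pd2_perspective_eventuallyEq (hb : b ≠ 0)
    (hφ : ∀ᶠ t in 𝓝 (a / b), HasDerivAt φ (φ' t) t) :
    uncurry (pd2 (perspective φ)) =ᶠ[𝓝 (a, b)]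
      uncurry fun x y => φ (x / y) - x / y * φ' (x / y) := by
  filter_upwards [eventually_hasDerivAt_div hb hφ] with z ⟨hz, hφz⟩
  exact (hasDerivAt_perspective_right hz hφz).deriv

theorem hessian_perspective (hb : b ≠ 0) (hφ : ∀ᶠ t in 𝓝 (a / b), HasDerivAt φ (φ' t) t)
    (hφ' : HasDerivAt φ' φ'' (a / b)) :
    hessian (perspective φ) a b = (φ'' / b) • vecMulVec ![1, -(a / b)] ![1, -(a / b)] := by
  have hψ := hasDerivAt_sub_mul_deriv hφ.self_of_nhds hφ'
  have hx : HasDerivAt (fun x => x / b) (1 / b) a := (hasDerivAt_id a).div_const b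
  have hy := hasDerivAt_const_div (c := a) hb
  have h11 : HasDerivAt (fun x => φ' (x / b)) (φ'' * (1 / b)) a := hφ'.comp a hx
  have h12 : HasDerivAt (fun y => φ' (a / y)) (φ'' * (-(a / b) / b)) b := hφ'.comp b hy
  have h21 : HasDerivAt (fun x => φ (x / b) - x / b * φ' (x / b))
      (-(a / b * φ'') * (1 / b)) a := by
    exact hψ.comp a hx
  have h22 : HasDerivAt (fun y => φ (a / y) - a / y * φ' (a / y))
      (-(a / b * φ'') * (-(a / b) / b)) b := by
    exact hψ.comp b hy
  rw [hessian, pd1_eq_of_eventuallyEq (pd1_perspective_eventuallyEq hb hφ),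
    pd2_eq_of_eventuallyEq (pd1_perspective_eventuallyEq hb hφ),
    pd1_eq_of_eventuallyEq (pd2_perspective_eventuallyEq hb hφ),
    pd2_eq_of_eventuallyEq (pd2_perspective_eventuallyEq hb hφ)]
  simp only [pd1, pd2]
  rw [h11.deriv, h12.deriv, h21.deriv, h22.deriv]
  ext i j
  fin_cases i <;> fin_cases j <;> simp <;> ring

end Perspective

theorem rank_hessian_perspective_neg_rpow {c p a b : ℝ} (hc : c ≠ 0) (hp₀ : p ≠ 0) (hp₁ : p ≠ 1)
    (hab : a / b < 0) : (hessian (perspective fun t => c * (-t) ^ p) a b).rank = 1 := by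
  have hb : b ≠ 0 := by rintro rfl; simp at hab
  have hφ : ∀ᶠ t in 𝓝 (a / b),
      HasDerivAt (fun t => c * (-t) ^ p) (c * (-1 * p * (-t) ^ (p - 1))) t := by
    filter_upwards [Iio_mem_nhds hab] with t (ht : t < 0)
    exact ((hasDerivAt_neg t).rpow_const (Or.inl (by linarith))).const_mul c
  have hφ' : HasDerivAt (fun t => c * (-1 * p * (-t) ^ (p - 1)))
      (c * (-1 * p * (-1 * (p - 1) * (-(a / b)) ^ (p - 1 - 1)))) (a / b) :=
    (((hasDerivAt_neg _).rpow_const (Or.inl (by linarith))).const_mul _).const_mul c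
  rw [hessian_perspective hb hφ hφ', ← smul_vecMulVec]
  have hw : ![(1 : ℝ), -(a / b)] ≠ 0 := fun h => one_ne_zero congr($h 0)
  have hpow : (-(a / b)) ^ (p - 1 - 1) ≠ 0 := (Real.rpow_pos_of_pos (neg_pos.mpr hab) _).ne'
  have hφ'' : c * (-1 * p * (-1 * (p - 1) * (-(a / b)) ^ (p - 1 - 1))) / b ≠ 0 := by
    simp [hc, hp₀, sub_ne_zero.mpr hp₁.symm, hpow, hb]
  exact rank_vecMulVec_eq_one (smul_ne_zero hφ'' hw) hw

theorem rpow_div_rpow_sub_one_eq_mul {u y : ℝ} (hu : 0 ≤ u) (hy : 0 < y) (p : ℝ) :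
    u ^ p / y ^ (p - 1) = y * (u / y) ^ p := by
  have : y ^ p ≠ 0 := by positivity
  rw [Real.div_rpow hu hy.le, Real.rpow_sub_one hy.ne']
  field_simp

theorem phaseM_eq_perspective {m : ℕ} (hm : m ≠ 1) {x y : ℝ} (hx : x ≤ 0) (hy : 0 < y) :
    phaseM m x y = perspective (fun t => -((m - 1 : ℝ) / m) * (-t) ^ ((m : ℝ) / (m - 1))) x y := by
  have hm' : (m : ℝ) - 1 ≠ 0 := sub_ne_zero.mpr (by exact_mod_cast hm)
  have hexp : (1 : ℝ) / (m - 1) = m / (m - 1) - 1 := by field_simp; ring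
  rw [phaseM, perspective, hexp, mul_div_assoc, rpow_div_rpow_sub_one_eq_mul (by linarith) hy,
    neg_div]
  ring

/-- The Hessian of `M(ξ) = -((m-1)/m)(-ξ₁)^{m/(m-1)}/ξ₂^{1/(m-1)}` has rank exactly one
at every point of the cone `ξ₁ < 0, ξ₂ > 0`. -/
theorem hessian_phaseM_rank_one (m : ℕ) (hm : 2 ≤ m) (a b : ℝ) (ha : a < 0) (hb : 0 < b) :
    (hessian (phaseM m) a b).rank = 1 := by
  have hm₁ : (1 : ℝ) < m := by exact_mod_cast hm
  have hloc : uncurry (phaseM m) =ᶠ[𝓝 (a, b)]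
      uncurry (perspective fun t => -((m - 1 : ℝ) / m) * (-t) ^ ((m : ℝ) / (m - 1))) := by
    filter_upwards [(isOpen_Iio.prod isOpen_Ioi).mem_nhds ⟨ha, hb⟩] with z ⟨hx, hy⟩
    exact phaseM_eq_perspective (by omega) (le_of_lt hx) hy
  rw [hessian_congr hloc]
  refine rank_hessian_perspective_neg_rpow ?_ ?_ ?_ (div_neg_of_neg_of_pos ha hb)
  · exact neg_ne_zero.mpr (by positivity)
  · positivity
  · rw [Ne, div_eq_one_iff_eq (by linarith)]
    linarith
end
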